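/- Let ν be a probability measure on ℝ with integrable identity of mean zero, ν((-∞,0)) = 1/2 = ν((0,∞)), and ν gives positive mass to (-∞,0) and (0,∞). Suppose θ = a·ω with a > 0 (perfectly correlated shocks). Let F > 0, H > 0, C be real numbers, set π_x(ω) = (B + a·ω)·F + ω·H − C for a real constant B, and let v < 0. Then the cross-partial N = v·[ (1/2)·∫_{(-∞,0)} π_x dν − (1/2)·∫_{(0,∞)} π_x dν ] is strictly positive; consequently, for any D < 0, ∂x*/∂γ = −N/D is strictly positive. (Proposition A.1: with perfectly correlated shocks and trigger 0 on either index, the optimal input increases with the payout when h'(x) > 0; when h'(x) < 0 the change is ambiguous.) -/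

import Mathlib

open MeasureTheory Set

/-!
With θ = a·ω the marginal profit π_x(ω) = (B·F − C) + (a·F + H)·ω is affine in ω. Since the
events {ω < 0} and {ω > 0} both have mass 1/2, the constant part cancels in N, and the mean-zero
condition gives ∫_{ω>0} ω = −∫_{ω<0} ω, so N = v·(a·F + H)·∫_{ω<0} ω dν: a product of two
negative numbers and a positive one.
-/

namespace MeasureTheory

variable {μ : Measure ℝ}

theorem setIntegral_Iio_zero_id_neg (hint : IntegrableOn id (Iio 0) μ) (hμ : 0 < μ (Iio 0)) :
    ∫ ω in Iio (0 : ℝ), ω ∂μ < 0 := by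
  have hnonneg : 0 ≤ᵐ[μ.restrict (Iio 0)] fun ω : ℝ => -ω := by
    filter_upwards [ae_restrict_mem measurableSet_Iio] with ω hω
    exact neg_nonneg.mpr (le_of_lt hω)
  have hpos : 0 < ∫ ω in Iio (0 : ℝ), -ω ∂μ := by
    rw [setIntegral_pos_iff_support_of_nonneg_ae hnonneg hint.neg]
    refine hμ.trans_le (measure_mono fun ω hω => ⟨neg_ne_zero.mpr (ne_of_lt hω), hω⟩)
  rw [integral_neg] at hpos
  linarith

theorem setIntegral_Ioi_zero_id_eq_neg (hint : Integrable id μ) (hmean : ∫ ω, ω ∂μ = 0) :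
    ∫ ω in Ioi (0 : ℝ), ω ∂μ = -∫ ω in Iio (0 : ℝ), ω ∂μ := by
  have hIci : ∫ ω in Ici (0 : ℝ), ω ∂μ = ∫ ω in Ioi (0 : ℝ), ω ∂μ :=
    setIntegral_eq_of_subset_of_forall_sdiff_eq_zero measurableSet_Ici Ioi_subset_Ici_self
      fun ω hω => le_antisymm (not_lt.mp hω.2) hω.1
  have hsplit :=
    integral_add_compl (μ := μ) (f := fun ω : ℝ => ω) (measurableSet_Iio (a := 0)) hint
  rw [compl_Iio, hIci, hmean] at hsplit
  linarith

theorem setIntegral_affine {s : Set ℝ} [IsFiniteMeasure μ] (hint : IntegrableOn id s μ)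
    (p q : ℝ) : ∫ ω in s, (p + q * ω) ∂μ = μ.real s * p + q * ∫ ω in s, ω ∂μ := by
  rw [integral_add (g := fun ω => q * ω) (integrable_const p) (hint.const_mul q),
    integral_const_mul, setIntegral_const, smul_eq_mul]

end MeasureTheory

theorem stmt_14_general (ν : Measure ℝ) [IsProbabilityMeasure ν]
    (hInt : Integrable id ν) (hmean : ∫ ω, ω ∂ν = 0)
    (hmed1 : ν (Iio 0) = 1/2) (hmed2 : ν (Ioi 0) = 1/2)
    (hneg : 0 < ν (Iio 0))
    (a B F H C v : ℝ) (ha : 0 < a) (hF : 0 < F) (hH : 0 < H) (hv : v < 0)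
    (N : ℝ)
    (hN : N = v * ((1/2) * ∫ ω in Iio (0 : ℝ), ((B + a * ω) * F + ω * H - C) ∂ν
            - (1/2) * ∫ ω in Ioi (0 : ℝ), ((B + a * ω) * F + ω * H - C) ∂ν)) :
    0 < N ∧ ∀ D : ℝ, D < 0 → 0 < -N / D := by
  have haffine : ∀ s : Set ℝ, ν s = 1/2 →
      ∫ ω in s, ((B + a * ω) * F + ω * H - C) ∂ν
        = 1/2 * (B * F - C) + (a * F + H) * ∫ ω in s, ω ∂ν := by
    intro s hs
    have hreal : ν.real s = 1/2 := by rw [measureReal_def, hs]; norm_num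
    simp_rw [show ∀ ω : ℝ, (B + a * ω) * F + ω * H - C = (B * F - C) + (a * F + H) * ω
      from fun ω => by ring]
    rw [setIntegral_affine hInt.integrableOn, hreal]
  have hNeq : N = v * (a * F + H) * ∫ ω in Iio (0 : ℝ), ω ∂ν := by
    rw [hN, haffine _ hmed1, haffine _ hmed2, setIntegral_Ioi_zero_id_eq_neg hInt hmean]
    ring
  have hNpos : 0 < N := by
    rw [hNeq]
    exact mul_pos_of_neg_of_neg (mul_neg_of_neg_of_pos hv (by positivity))
      (setIntegral_Iio_zero_id_neg hInt.integrableOn hneg)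
  exact ⟨hNpos, fun D hD => div_pos_of_neg_of_neg (neg_neg_iff_pos.mpr hNpos) hD⟩

/-- Proposition A.1: with perfectly correlated shocks θ = a·ω (a > 0), a
median-0 trigger (ν(−∞,0) = 1/2 = ν(0,∞), both with positive mass), marginal
profit π_x(ω) = (B + a·ω)·F + ω·H − C with F > 0 and H > 0 (risk-increasing
input), and concave utility (common second derivative v < 0), the
cross-partial N = v·[(1/2)·∫_{ω<0} π_x dν − (1/2)·∫_{ω>0} π_x dν] is strictly
positive; hence for any D < 0, ∂x*/∂γ = −N/D > 0: the optimal input increases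
with the payout. -/
theorem stmt_14 (ν : Measure ℝ) [IsProbabilityMeasure ν]
    (hInt : Integrable id ν) (hmean : ∫ ω, ω ∂ν = 0)
    (hmed1 : ν (Iio 0) = 1/2) (hmed2 : ν (Ioi 0) = 1/2)
    (hneg : 0 < ν (Iio 0)) (hpos : 0 < ν (Ioi 0))
    (a B F H C v : ℝ) (ha : 0 < a) (hF : 0 < F) (hH : 0 < H) (hv : v < 0)
    (N : ℝ)
    (hN : N = v * ((1/2) * ∫ ω in Iio (0 : ℝ), ((B + a * ω) * F + ω * H - C) ∂ν
            - (1/2) * ∫ ω in Ioi (0 : ℝ), ((B + a * ω) * F + ω * H - C) ∂ν)) :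
    0 < N ∧ ∀ D : ℝ, D < 0 → 0 < -N / D :=
  stmt_14_general ν hInt hmean hmed1 hmed2 hneg a B F H C v ha hF hH hv N hN
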